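/- arXiv:2112.06077 — 7 statements merged into one kernel-verified Lean document; each statement's English description precedes it below -/
import Mathlib

section
/- Let K be a field, p, q, s, t ∈ K, and set A = ![![0, p], ![q, 0]] and B = ![![0, s], ![t, 0]] (2×2 matrices over K). Assume pq = k ≠ 0. Then there exists G ∈ SL(2, K) with G * A * G⁻¹ = B if and only if s * t = k and there exist x, y ∈ K such that x² − k·y² = p·s. -/
/-!
Conjugating `!![0, p; q, 0]` to `!![0, s; t, 0]` by `G = !![a, b; c, d]` is the linear system
`b q = s c`, `a p = s d`, `d q = t a`, `c p = t b`. Together with `a d - b c = 1` it forces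
`s t = p q`, and multiplying the determinant by `p s` gives `(a p)² - p q b² = p s`.
Conversely a solution of `x² - p q y² = p s` yields the conjugator `!![x / p, y; y q / s, x / s]`.
-/

namespace Matrix

theorem SpecialLinearGroup.coe_mul_mul_coe_inv_eq_iff {n R : Type*} [DecidableEq n] [Fintype n]
    [CommRing R] (G : SpecialLinearGroup n R) (A B : Matrix n n R) :
    (G : Matrix n n R) * A * ((G⁻¹ : SpecialLinearGroup n R) : Matrix n n R) = B ↔
      (G : Matrix n n R) * A = B * G := by
  constructor
  · rintro rfl
    rw [Matrix.mul_assoc _ _ (G : Matrix n n R), ← SpecialLinearGroup.coe_mul, inv_mul_cancel,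
      SpecialLinearGroup.coe_one, Matrix.mul_one]
  · intro h
    rw [h, Matrix.mul_assoc, ← SpecialLinearGroup.coe_mul, mul_inv_cancel,
      SpecialLinearGroup.coe_one, Matrix.mul_one]

theorem mul_antidiag_eq_antidiag_mul_iff {R : Type*} [CommRing R] (a b c d p q s t : R) :
    !![a, b; c, d] * !![0, p; q, 0] = !![0, s; t, 0] * !![a, b; c, d] ↔
      b * q = s * c ∧ a * p = s * d ∧ d * q = t * a ∧ c * p = t * b := by
  rw [mul_fin_two, mul_fin_two]
  simp only [mul_zero, zero_add, add_zero, zero_mul, EmbeddingLike.apply_eq_iff_eq, vecCons_inj,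
    and_true, and_assoc]

theorem antidiag_conj_invariants {R : Type*} [CommRing R] {a b c d p q s t : R}
    (hdet : a * d - b * c = 1) (h₁ : b * q = s * c) (h₂ : a * p = s * d) (h₃ : d * q = t * a)
    (h₄ : c * p = t * b) :
    s * t = p * q ∧ (a * p) ^ 2 - p * q * b ^ 2 = p * s := by
  constructor
  · linear_combination (p * q - s * t) * hdet - d * q * h₂ - s * d * h₃ + c * p * h₁ + s * c * h₄
  · linear_combination a * p * h₂ + p * s * hdet - p * b * h₁

theorem antidiag_conj_of_norm_eq {K : Type*} [Field K] {p q s t x y : K} (hp : p ≠ 0)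
    (hs : s ≠ 0) (hst : s * t = p * q) (hxy : x ^ 2 - p * q * y ^ 2 = p * s) :
    !![x / p, y; y * q / s, x / s].det = 1 ∧
      !![x / p, y; y * q / s, x / s] * !![0, p; q, 0] =
        !![0, s; t, 0] * !![x / p, y; y * q / s, x / s] := by
  have ht : t = p * q / s := by field_simp; linear_combination hst
  subst ht
  refine ⟨?_, (mul_antidiag_eq_antidiag_mul_iff ..).2 ⟨?_, ?_, ?_, ?_⟩⟩
  · rw [det_fin_two_of]
    field_simp
    linear_combination hxy
  all_goals field_simp

end Matrix

open Matrix in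
/-- Two anti-diagonal 2×2 matrices with nonzero determinant data:
`A = !![0, p; q, 0]` and `B = !![0, s; t, 0]` with `p*q = k ≠ 0` are conjugate by an
element of `SL(2, K)` iff `s*t = k` and `x² - k y² = p s` is solvable in `K`. -/
theorem anti_diagonal_sl2_conjugacy {K : Type*} [Field K] (p q s t k : K)
    (hpq : p * q = k) (hk : k ≠ 0) :
    (∃ G : Matrix.SpecialLinearGroup (Fin 2) K,
        (G : Matrix (Fin 2) (Fin 2) K) * !![0, p; q, 0] *
          ((G⁻¹ : Matrix.SpecialLinearGroup (Fin 2) K) : Matrix (Fin 2) (Fin 2) K)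
          = !![0, s; t, 0]) ↔
      s * t = k ∧ ∃ x y : K, x ^ 2 - k * y ^ 2 = p * s := by
  subst hpq
  simp only [SpecialLinearGroup.coe_mul_mul_coe_inv_eq_iff]
  constructor
  · rintro ⟨G, hG⟩
    have hdet : G 0 0 * G 1 1 - G 0 1 * G 1 0 = 1 := by rw [← det_fin_two, G.det_coe]
    rw [eta_fin_two (G : Matrix (Fin 2) (Fin 2) K), mul_antidiag_eq_antidiag_mul_iff] at hG
    obtain ⟨hst, hnorm⟩ := antidiag_conj_invariants hdet hG.1 hG.2.1 hG.2.2.1 hG.2.2.2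
    exact ⟨hst, _, _, hnorm⟩
  · rintro ⟨hst, x, y, hxy⟩
    have hp : p ≠ 0 := left_ne_zero_of_mul hk
    have hs : s ≠ 0 := left_ne_zero_of_mul (hst ▸ hk)
    obtain ⟨hdet, hconj⟩ := antidiag_conj_of_norm_eq hp hs hst hxy
    exact ⟨⟨_, hdet⟩, hconj⟩
end

section
/- Let K be a field, p, s ∈ K, and set A = ![![0, p], ![0, 0]] and B = ![![0, s], ![0, 0]] (2×2 matrices over K). Then there exists G ∈ SL(2, K) with G * A * G⁻¹ = B if and only if there exists x ∈ Kˣ (a nonzero element of K) such that x²·p = s. -/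
/-!
If `G = !![a, b; c, d]` in `SL(2, K)` satisfies `G * !![0, p; 0, 0] = !![0, s; 0, 0] * G`,
comparing entries and expanding `s = s * det G`, `p = p * det G` gives `s = a ^ 2 * p` and
`p = a * d * p`; so `x = a` works unless `a = 0`, and then `p = s = 0`. Conversely
`diag(x, x⁻¹)` scales the off-diagonal entry by `x ^ 2`.
-/

namespace Matrix.SpecialLinearGroup

theorem coe_mul_mul_coe_inv_eq_iff_s1 {n R : Type*} [Fintype n] [DecidableEq n] [CommRing R]
    (G : SpecialLinearGroup n R) (A B : Matrix n n R) :
    (G : Matrix n n R) * A * ((G⁻¹ : SpecialLinearGroup n R) : Matrix n n R) = B ↔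
      (G : Matrix n n R) * A = B * G := by
  have inv_mul : ((G⁻¹ : SpecialLinearGroup n R) : Matrix n n R) * G = 1 := by
    rw [← coe_mul, inv_mul_cancel, coe_one]
  have mul_inv : (G : Matrix n n R) * ((G⁻¹ : SpecialLinearGroup n R) : Matrix n n R) = 1 := by
    rw [← coe_mul, mul_inv_cancel, coe_one]
  constructor
  · rintro rfl
    rw [mul_assoc _ _ (G : Matrix n n R), inv_mul, mul_one]
  · intro h
    rw [h, mul_assoc, mul_inv, mul_one]

theorem diag2_mul_mul_inv {F : Type*} [Field F] (a : F) (ha : a ≠ 0) (p : F) :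
    ((diag2 a ha : SpecialLinearGroup (Fin 2) F) : Matrix (Fin 2) (Fin 2) F) * !![0, p; 0, 0] *
        (((diag2 a ha)⁻¹ : SpecialLinearGroup (Fin 2) F) : Matrix (Fin 2) (Fin 2) F) =
      !![0, a ^ 2 * p; 0, 0] := by
  rw [diag2_inv, diag2_coe', diag2_coe', inv_inv]
  ext i j
  fin_cases i <;> fin_cases j <;> simp [sq, mul_comm, mul_left_comm]

end Matrix.SpecialLinearGroup

theorem Matrix.sq_mul_eq_and_mul_mul_eq_of_mul_eq_mul {R : Type*} [CommRing R] {p s : R}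
    {M : Matrix (Fin 2) (Fin 2) R} (hdet : M.det = 1)
    (h : M * !![0, p; 0, 0] = !![0, s; 0, 0] * M) :
    M 0 0 ^ 2 * p = s ∧ M 0 0 * M 1 1 * p = p := by
  have h00 := congrFun (congrFun h 0) 0
  have h01 := congrFun (congrFun h 0) 1
  have h11 := congrFun (congrFun h 1) 1
  simp [mul_apply, Fin.sum_univ_two] at h00 h01 h11
  rw [det_fin_two] at hdet
  constructor
  · linear_combination M 0 0 * h01 + s * hdet - M 0 1 * h00
  · linear_combination p * hdet + M 0 1 * h11

/-- The strictly upper triangular 2×2 matrices `A = !![0, p; 0, 0]` and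
`B = !![0, s; 0, 0]` are conjugate by an element of `SL(2, K)` iff `s = x² p`
for some nonzero `x ∈ K`. -/
theorem nilpotent_sl2_conjugacy {K : Type*} [Field K] (p s : K) :
    (∃ G : Matrix.SpecialLinearGroup (Fin 2) K,
        (G : Matrix (Fin 2) (Fin 2) K) * !![0, p; 0, 0] *
          ((G⁻¹ : Matrix.SpecialLinearGroup (Fin 2) K) : Matrix (Fin 2) (Fin 2) K)
          = !![0, s; 0, 0]) ↔
      ∃ x : Kˣ, (x : K) ^ 2 * p = s := by
  constructor
  · rintro ⟨G, hG⟩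
    rw [Matrix.SpecialLinearGroup.coe_mul_mul_coe_inv_eq_iff_s1] at hG
    obtain ⟨hs, hp⟩ := Matrix.sq_mul_eq_and_mul_mul_eq_of_mul_eq_mul G.det_coe hG
    by_cases ha : (G : Matrix (Fin 2) (Fin 2) K) 0 0 = 0
    · have hp0 : p = 0 := by rw [← hp, ha, zero_mul, zero_mul]
      exact ⟨1, by rw [← hs, ha, hp0, mul_zero, mul_zero]⟩
    · exact ⟨Units.mk0 _ ha, hs⟩
  · rintro ⟨x, rfl⟩
    exact ⟨Matrix.SpecialLinearGroup.diag2 x x.ne_zero,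
      Matrix.SpecialLinearGroup.diag2_mul_mul_inv _ _ p⟩
end

section
/- Let K be a field and k ∈ K. Define the relation ∼ₖ on Kˣ (the nonzero elements of K) by a ∼ₖ b ⇔ ∃ x, y ∈ K such that x² − k·y² = a·b. Then ∼ₖ is an equivalence relation on Kˣ: it is reflexive, symmetric and transitive. -/
/-! The values of the binary form `x² - k y²` form a multiplicative monoid (Brahmagupta's
identity) containing every square. Hence if `ab` and `bc` are values and `b` is invertible,
so is `ac = (ab)(bc)(b⁻¹)²`. -/

section NormFormValues

variable {R : Type*} [CommRing R]

def normFormValues (k : R) : Submonoid R where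
  carrier := {z | ∃ x y : R, x ^ 2 - k * y ^ 2 = z}
  one_mem' := ⟨1, 0, by ring⟩
  mul_mem' := by
    rintro _ _ ⟨x₁, x₂, rfl⟩ ⟨y₁, y₂, rfl⟩
    exact ⟨x₁ * y₁ + k * x₂ * y₂, x₁ * y₂ + x₂ * y₁, by ring⟩

theorem sq_mem_normFormValues (k a : R) : a ^ 2 ∈ normFormValues k :=
  ⟨a, 0, by ring⟩

theorem mul_mem_normFormValues_of_mul_mem {k a c : R} (b : Rˣ)
    (hab : a * b ∈ normFormValues k) (hbc : (b : R) * c ∈ normFormValues k) :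
    a * c ∈ normFormValues k := by
  have key : a * c = a * b * (b * c) * (b⁻¹ : Rˣ) ^ 2 := by
    linear_combination (-a * c * (b * (b⁻¹ : Rˣ) + 1)) * b.mul_inv
  exact key ▸ mul_mem (mul_mem hab hbc) (sq_mem_normFormValues k _)

end NormFormValues

/-- For a field `K` and `k ∈ K`, the relation
`a ∼ₖ b ↔ ∃ x y, x² - k y² = a b` is an equivalence relation on `Kˣ`. -/
theorem norm_form_equivalence {K : Type*} [Field K] (k : K) :
    Equivalence (fun a b : Kˣ => ∃ x y : K, x ^ 2 - k * y ^ 2 = (a : K) * (b : K)) :=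
  ⟨fun a => (sq (a : K)) ▸ sq_mem_normFormValues k (a : K),
    fun {a b} h => mul_comm (a : K) b ▸ h,
    fun {_ b _} => mul_mem_normFormValues_of_mul_mem b⟩
end

section
/- Let K be a field. Let SL(2, K) act on pairs (f, v), where f : K² → K is a linear functional and v ∈ K², by g · (f, v) = (f ∘ g⁻¹, g v). For f ≠ 0 with f(v) = 0, write t(f, v) for the unique scalar with v = t(f, v) · (f(e₂), −f(e₁)) (here e₁, e₂ is the standard basis of K²; the vector (f(e₂), −f(e₁)) spans ker f). Then two pairs (f, v) and (f', v') lie in the same SL(2, K)-orbit if and only if: (f = 0 ↔ f' = 0), (v = 0 ↔ v' = 0), f(v) = f'(v'), and moreover, in the case f ≠ 0 and f(v) = 0, additionally t(f, v) = t(f', v'). -/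
/-!
The pairing `(k, x) ↦ det [k | x]` identifies `(K²)*` with `K²` compatibly with `SL(2, K)`:
`f = det [kerVec f | ·]` and `kerVec (f ∘ g⁻¹) = g • kerVec f`. So the orbits on pairs `(f, v)`
are the orbits of the diagonal action on pairs of vectors `(k, v)`. There `det [k | v]` is
invariant; when it is nonzero, `[k' | v'] [k | v]⁻¹` lies in `SL(2, K)` and moves one pair to the
other, and when it vanishes, `v` is a multiple `t • k` of `k ≠ 0` and transitivity of `SL(2, K)`
on nonzero vectors finishes the job.
-/

open Matrix
open scoped MatrixGroups

namespace SL2Orbit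

def ofCols {R : Type*} (a b : Fin 2 → R) : Matrix (Fin 2) (Fin 2) R := !![a 0, b 0; a 1, b 1]

theorem ofCols_inj {R : Type*} {a b a' b' : Fin 2 → R} :
    ofCols a b = ofCols a' b' ↔ a = a' ∧ b = b' := by
  simp [ofCols, funext_iff, Fin.forall_fin_two, and_assoc, and_left_comm]

section CommRing

variable {R : Type*} [CommRing R]

theorem det_ofCols (a b : Fin 2 → R) : (ofCols a b).det = a 0 * b 1 - b 0 * a 1 :=
  det_fin_two_of ..

theorem mul_ofCols (A : Matrix (Fin 2) (Fin 2) R) (a b : Fin 2 → R) :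
    A * ofCols a b = ofCols (A *ᵥ a) (A *ᵥ b) := by
  ext i j
  fin_cases i <;> fin_cases j <;> simp [ofCols, mul_apply, mulVec, dotProduct, Fin.sum_univ_two]

theorem det_ofCols_smul (g : SL(2, R)) (a b : Fin 2 → R) :
    (ofCols (g • a) (g • b)).det = (ofCols a b).det := by
  rw [show ofCols (g • a) (g • b) = g * ofCols a b from (mul_ofCols ..).symm, det_mul, g.det_coe,
    one_mul]

end CommRing

variable {K : Type*} [Field K]

theorem exists_eq_smul_of_det_ofCols_eq_zero {a b : Fin 2 → K} (ha : a ≠ 0)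
    (h : (ofCols a b).det = 0) : ∃ t : K, b = t • a := by
  rw [det_ofCols] at h
  have hminor : ∀ i j : Fin 2, b j * a i = b i * a j := by
    simp only [Fin.forall_fin_two]
    exact ⟨⟨trivial, by linear_combination h⟩, by linear_combination -h, trivial⟩
  obtain ⟨i, hi⟩ := Function.ne_iff.1 ha
  refine ⟨b i / a i, funext fun j => ?_⟩
  rw [Pi.smul_apply, smul_eq_mul, div_mul_eq_mul_div, eq_div_iff hi, hminor]

theorem exists_SL2_smul_single_zero_eq {a : Fin 2 → K} (ha : a ≠ 0) :
    ∃ g : SL(2, K), a = g • Pi.single 0 1 := by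
  have hcop : IsCoprime (a 0) (a 1) := by
    refine Semifield.isCoprime_iff.2 ?_
    by_contra! h
    exact ha (funext <| Fin.forall_fin_two.2 h)
  obtain ⟨g, h0, h1⟩ := hcop.exists_SL2_col 0
  refine ⟨g, ?_⟩
  change a = (g : Matrix (Fin 2) (Fin 2) K) *ᵥ Pi.single 0 1
  rw [mulVec_single_one]
  ext i
  fin_cases i <;> simp [h0, h1]

theorem exists_SL2_smul_eq_of_ne_zero {a a' : Fin 2 → K} (ha : a ≠ 0) (ha' : a' ≠ 0) :
    ∃ g : SL(2, K), a' = g • a := by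
  obtain ⟨g, rfl⟩ := exists_SL2_smul_single_zero_eq ha
  obtain ⟨g', rfl⟩ := exists_SL2_smul_single_zero_eq ha'
  exact ⟨g' * g⁻¹, by rw [mul_smul, inv_smul_smul]⟩

theorem exists_SL2_smul_eq_of_det_ofCols_eq {a b a' b' : Fin 2 → K}
    (h0 : (ofCols a b).det ≠ 0) (h : (ofCols a' b').det = (ofCols a b).det) :
    ∃ g : SL(2, K), a' = g • a ∧ b' = g • b := by
  refine ⟨⟨ofCols a' b' * (ofCols a b)⁻¹, ?_⟩, ?_⟩
  · rw [det_mul, det_nonsing_inv, h, Ring.mul_inverse_cancel _ h0.isUnit]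
  have hM := nonsing_inv_mul_cancel_right (ofCols a b) (ofCols a' b') h0.isUnit
  rw [mul_ofCols, ofCols_inj] at hM
  exact ⟨hM.1.symm, hM.2.symm⟩

theorem exists_SL2_smul_pair_iff (a a' b b' : Fin 2 → K) :
    (∃ g : SL(2, K), a' = g • a ∧ b' = g • b) ↔
      ((a = 0 ↔ a' = 0) ∧ (b = 0 ↔ b' = 0) ∧ (ofCols a b).det = (ofCols a' b').det ∧
        (a ≠ 0 → (ofCols a b).det = 0 → ∃ t : K, b = t • a ∧ b' = t • a')) := by
  constructor
  · rintro ⟨g, rfl, rfl⟩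
    refine ⟨(smul_eq_zero_iff_eq g).symm, (smul_eq_zero_iff_eq g).symm,
      (det_ofCols_smul g a b).symm, fun ha h => ?_⟩
    obtain ⟨t, rfl⟩ := exists_eq_smul_of_det_ofCols_eq_zero ha h
    exact ⟨t, rfl, smul_comm g t a⟩
  · rintro ⟨ha, hb, hdet, hpar⟩
    by_cases ha0 : a = 0
    · have ha0' : a' = 0 := ha.1 ha0
      by_cases hb0 : b = 0
      · exact ⟨1, by simp [ha0, ha0'], by simp [hb0, hb.1 hb0]⟩
      · obtain ⟨g, hg⟩ := exists_SL2_smul_eq_of_ne_zero hb0 (mt hb.2 hb0)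
        exact ⟨g, by simp [ha0, ha0'], hg⟩
    by_cases hd : (ofCols a b).det = 0
    · obtain ⟨t, rfl, rfl⟩ := hpar ha0 hd
      obtain ⟨g, rfl⟩ := exists_SL2_smul_eq_of_ne_zero ha0 (mt ha.2 ha0)
      exact ⟨g, rfl, (smul_comm g t a).symm⟩
    · exact exists_SL2_smul_eq_of_det_ofCols_eq hd hdet.symm

def kerVec (f : (Fin 2 → K) →ₗ[K] K) : Fin 2 → K := ![f (Pi.single 1 1), -f (Pi.single 0 1)]

theorem apply_eq_det_ofCols_kerVec (f : (Fin 2 → K) →ₗ[K] K) (x : Fin 2 → K) :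
    f x = (ofCols (kerVec f) x).det := by
  have hx : x = x 0 • Pi.single 0 1 + x 1 • Pi.single 1 1 := by
    ext i; fin_cases i <;> simp
  conv_lhs => rw [hx]
  simp only [map_add, map_smul, smul_eq_mul, kerVec, det_ofCols, cons_val_zero, cons_val_one]
  ring

theorem kerVec_eq_of_forall_apply_eq_det {f : (Fin 2 → K) →ₗ[K] K} {k : Fin 2 → K}
    (hk : ∀ x, f x = (ofCols k x).det) : kerVec f = k := by
  ext i
  fin_cases i <;> simp [kerVec, hk, det_ofCols]

theorem kerVec_injective : Function.Injective (kerVec (K := K)) := fun f h hfh =>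
  LinearMap.ext fun x => by rw [apply_eq_det_ofCols_kerVec, hfh, ← apply_eq_det_ofCols_kerVec]

theorem kerVec_eq_zero_iff {f : (Fin 2 → K) →ₗ[K] K} : kerVec f = 0 ↔ f = 0 :=
  kerVec_injective.eq_iff' (by simp [kerVec])

theorem kerVec_comp_toLin'_inv (g : SL(2, K)) (f : (Fin 2 → K) →ₗ[K] K) :
    kerVec (f ∘ₗ toLin' ↑g⁻¹) = g • kerVec f := by
  refine kerVec_eq_of_forall_apply_eq_det fun x => ?_
  change f (g⁻¹ • x) = _
  rw [apply_eq_det_ofCols_kerVec, ← det_ofCols_smul g, smul_inv_smul]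

end SL2Orbit

open SL2Orbit in
/-- `SL(2, K)` acts on pairs `(f, v)` of a linear functional and a vector
by `g • (f, v) = (f ∘ g⁻¹, g v)`. Two pairs lie in the same orbit iff
`(f = 0 ↔ f' = 0)`, `(v = 0 ↔ v' = 0)`, `f v = f' v'`, and moreover, when `f ≠ 0` and
`f v = 0`, the scalars `t` with `v = t • (f e₂, -f e₁)` and `v' = t' • (f' e₂, -f' e₁)`
coincide (the vector `(f e₂, -f e₁)` spans `ker f`, so such scalars exist and are
unique; equality is expressed by the existence of a common scalar `t`). -/
theorem sl2_orbit_functional_vector {K : Type*} [Field K]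
    (f f' : (Fin 2 → K) →ₗ[K] K) (v v' : Fin 2 → K) :
    (∃ g : Matrix.SpecialLinearGroup (Fin 2) K,
        f' = f ∘ₗ Matrix.toLin'
            ((g⁻¹ : Matrix.SpecialLinearGroup (Fin 2) K) : Matrix (Fin 2) (Fin 2) K) ∧
        v' = Matrix.mulVec (g : Matrix (Fin 2) (Fin 2) K) v) ↔
      ((f = 0 ↔ f' = 0) ∧ (v = 0 ↔ v' = 0) ∧ f v = f' v' ∧
        (f ≠ 0 → f v = 0 →
          ∃ t : K, v = t • ![f (Pi.single 1 1), -f (Pi.single 0 1)] ∧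
            v' = t • ![f' (Pi.single 1 1), -f' (Pi.single 0 1)])) := by
  have hcomp (g : SL(2, K)) :
      f' = f ∘ₗ toLin' ((g⁻¹ : SL(2, K)) : Matrix (Fin 2) (Fin 2) K) ↔
        kerVec f' = g • kerVec f := by
    rw [← kerVec_comp_toLin'_inv, kerVec_injective.eq_iff]
  simp only [hcomp, ne_eq, ← kerVec_eq_zero_iff (f := f), ← kerVec_eq_zero_iff (f := f'),
    apply_eq_det_ofCols_kerVec f v, apply_eq_det_ofCols_kerVec f' v']
  -- `g • v` unfolds to `↑g *ᵥ v`
  exact exists_SL2_smul_pair_iff (kerVec f) (kerVec f') v v'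
end

section
/- Let l ≥ 4. Realize the root system Φ of type D_l concretely as Φ = {±eᵢ ± eⱼ : 1 ≤ i < j ≤ l} ⊂ ℚˡ with the standard inner product ⟨·,·⟩, let δ = e₁ + e₂ be the maximal root, Φ₀ = {α ∈ Φ : ⟨α, δ⟩ = 0}, Φ₁ = {α ∈ Φ : ⟨α, δ⟩ = 1}, and let W₀ be the group of linear automorphisms of ℚˡ generated by the reflections s_α : x ↦ x − 2(⟨x,α⟩/⟨α,α⟩)α for α ∈ Φ₀. Then W₀ acts transitively on Φ₁. -/
/-- The standard inner product on `ℚˡ`. -/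
def ip {l : ℕ} (x y : Fin l → ℚ) : ℚ := ∑ i, x i * y i

/-- The standard basis vector `eᵢ` of `ℚˡ`. -/
def ev {l : ℕ} (i : Fin l) : Fin l → ℚ := Pi.single i 1

/-- The root system of type `D_l`: `Φ = {±eᵢ ± eⱼ : i < j}`. -/
def PhiD (l : ℕ) : Set (Fin l → ℚ) :=
  {α | ∃ i j : Fin l, i < j ∧
    (α = ev i + ev j ∨ α = ev i - ev j ∨ α = -ev i + ev j ∨ α = -ev i - ev j)}

/-- The maximal root `δ = e₁ + e₂` of `D_l`. -/
def deltaD (l : ℕ) (hl : 4 ≤ l) : Fin l → ℚ :=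
  ev ⟨0, by omega⟩ + ev ⟨1, by omega⟩

/-- The roots orthogonal to `δ`. -/
def Phi0D (l : ℕ) (hl : 4 ≤ l) : Set (Fin l → ℚ) :=
  {α ∈ PhiD l | ip α (deltaD l hl) = 0}

/-- The roots with `⟨α, δ⟩ = 1`. -/
def Phi1D (l : ℕ) (hl : 4 ≤ l) : Set (Fin l → ℚ) :=
  {α ∈ PhiD l | ip α (deltaD l hl) = 1}

/-- The group `W₀` generated by the reflections `s_α`, `α ∈ Φ₀`. -/
def W0D (l : ℕ) (hl : 4 ≤ l) : Subgroup ((Fin l → ℚ) ≃ₗ[ℚ] (Fin l → ℚ)) :=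
  Subgroup.closure
    {g | ∃ α ∈ Phi0D l hl, ∀ x, g x = x - (2 * ip x α / ip α α) • α}

/-!
Write a root of `Φ₁` as `e_p ± e_j` with `e_p` a summand of `δ` and `j` outside. If `α ∈ Φ₀` and
`⟨β, α⟩ = -1`, then `s_α β = β + α`, so `β + α` lies in the `W₀`-orbit of `β`. Adding
`e_q - e_p` or `e_k - e_j` (roots of `Φ₀`) changes either index at will, and adding
`e_j - e_m` and then `e_j + e_m`, for some `m ≠ j` outside the support of `δ` (one exists as
`l ≥ 4`), turns `e_p - e_j` into `e_p + e_j`. Indices are `0`-based: `δ = e₀ + e₁`, and `k.val < 2`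
singles out its support.
-/

open Matrix MulAction

variable {l : ℕ}

lemma ip_eq_dotProduct (x y : Fin l → ℚ) : ip x y = x ⬝ᵥ y := rfl

lemma ev_dotProduct_ev (i j : Fin l) : ev i ⬝ᵥ ev j = if i = j then 1 else 0 := by
  simp [ev, Pi.single_apply, eq_comm]

lemma ev_dotProduct_deltaD (hl : 4 ≤ l) (k : Fin l) :
    ev k ⬝ᵥ deltaD l hl = if k.val < 2 then 1 else 0 := by
  simp only [deltaD, dotProduct_add, ev_dotProduct_ev, Fin.ext_iff]
  split_ifs <;> norm_num <;> omega

lemma ev_add_ev_mem_PhiD {i j : Fin l} (hij : i ≠ j) : ev i + ev j ∈ PhiD l := by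
  rcases hij.lt_or_gt with h | h
  · exact ⟨i, j, h, .inl rfl⟩
  · exact ⟨j, i, h, .inl (add_comm _ _)⟩

lemma ev_sub_ev_mem_PhiD {i j : Fin l} (hij : i ≠ j) : ev i - ev j ∈ PhiD l := by
  rcases hij.lt_or_gt with h | h
  · exact ⟨i, j, h, .inr (.inl rfl)⟩
  · exact ⟨j, i, h, .inr (.inr (.inl (by abel)))⟩

lemma dotProduct_self_of_mem_PhiD {α : Fin l → ℚ} (hα : α ∈ PhiD l) : α ⬝ᵥ α = 2 := by
  obtain ⟨i, j, hij, h | h | h | h⟩ := hα <;>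
  · subst h
    simp only [dotProduct_add, add_dotProduct, dotProduct_sub, sub_dotProduct, neg_dotProduct,
      dotProduct_neg, ev_dotProduct_ev, hij.ne, hij.ne', if_true, if_false]
    norm_num

def rootReflection {α : Fin l → ℚ} (hα : α ∈ PhiD l) : (Fin l → ℚ) ≃ₗ[ℚ] (Fin l → ℚ) :=
  Module.reflection (f := dotProductEquiv ℚ (Fin l) α) (x := α) (dotProduct_self_of_mem_PhiD hα)

lemma rootReflection_apply {α : Fin l → ℚ} (hα : α ∈ PhiD l) (x : Fin l → ℚ) :
    rootReflection hα x = x - (x ⬝ᵥ α) • α := by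
  rw [dotProduct_comm]
  exact Module.reflection_apply x (dotProduct_self_of_mem_PhiD hα)

lemma exists_two_le_ne (hl : 4 ≤ l) (j : Fin l) : ∃ m : Fin l, 2 ≤ m.val ∧ m ≠ j := by
  by_cases hj : j.val = 2
  · exact ⟨⟨3, by omega⟩, by norm_num, Fin.ne_of_val_ne (by simp only; omega)⟩
  · exact ⟨⟨2, by omega⟩, le_rfl, Fin.ne_of_val_ne (Ne.symm hj)⟩

variable {hl : 4 ≤ l}

lemma exists_eq_ev_add_ev_or_ev_sub_ev {β : Fin l → ℚ} (hβ : β ∈ Phi1D l hl) :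
    ∃ p j : Fin l, p.val < 2 ∧ 2 ≤ j.val ∧ (β = ev p + ev j ∨ β = ev p - ev j) := by
  obtain ⟨⟨i, j, hij, h | h | h | h⟩, hβδ⟩ := hβ <;> subst h <;>
    simp only [ip_eq_dotProduct, add_dotProduct, sub_dotProduct, neg_dotProduct,
      ev_dotProduct_deltaD] at hβδ <;>
    split_ifs at hβδ with hi hj <;> norm_num at hβδ
  all_goals first
    | exact ⟨i, j, hi, by omega, .inl rfl⟩
    | exact ⟨i, j, hi, by omega, .inr rfl⟩
    | exact absurd (Fin.lt_def.mp hij) (by omega)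

lemma ev_sub_ev_mem_Phi0D {i j : Fin l} (hij : i ≠ j) (hlow : i.val < 2 ↔ j.val < 2) :
    ev i - ev j ∈ Phi0D l hl :=
  ⟨ev_sub_ev_mem_PhiD hij, by
    rw [ip_eq_dotProduct, sub_dotProduct, ev_dotProduct_deltaD, ev_dotProduct_deltaD]
    simp [hlow]⟩

lemma ev_add_ev_mem_Phi0D {i j : Fin l} (hij : i ≠ j) (hi : 2 ≤ i.val) (hj : 2 ≤ j.val) :
    ev i + ev j ∈ Phi0D l hl :=
  ⟨ev_add_ev_mem_PhiD hij, by
    rw [ip_eq_dotProduct, add_dotProduct, ev_dotProduct_deltaD, ev_dotProduct_deltaD,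
      if_neg (by omega), if_neg (by omega), add_zero]⟩

lemma rootReflection_mem_W0D {α : Fin l → ℚ} (hα : α ∈ Phi0D l hl) :
    rootReflection hα.1 ∈ W0D l hl := by
  refine Subgroup.subset_closure ⟨α, hα, fun x => ?_⟩
  rw [rootReflection_apply, ip_eq_dotProduct, ip_eq_dotProduct, dotProduct_self_of_mem_PhiD hα.1,
    mul_div_cancel_left₀ _ two_ne_zero]

lemma orbit_add_of_mem_Phi0D {α β : Fin l → ℚ} (hα : α ∈ Phi0D l hl) (hβα : β ⬝ᵥ α = -1) :
    orbit (W0D l hl) (β + α) = orbit (W0D l hl) β :=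
  orbit_eq_iff.mpr ⟨⟨_, rootReflection_mem_W0D hα⟩, by
    change rootReflection hα.1 β = _
    rw [rootReflection_apply, hβα, neg_one_smul, sub_neg_eq_add]⟩

lemma orbit_ev_add_ev_left {p q j : Fin l} (hp : p.val < 2) (hq : q.val < 2) (hj : 2 ≤ j.val) :
    orbit (W0D l hl) (ev p + ev j) = orbit (W0D l hl) (ev q + ev j) := by
  rcases eq_or_ne p q with rfl | hpq
  · rfl
  have hpj : p ≠ j := Fin.ne_of_val_ne (by omega)
  have hqj : q ≠ j := Fin.ne_of_val_ne (by omega)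
  rw [← orbit_add_of_mem_Phi0D (ev_sub_ev_mem_Phi0D hpq.symm (by simp [hp, hq]))]
  · congr 1; abel
  · simp [add_dotProduct, dotProduct_sub, ev_dotProduct_ev, hpq, hpj.symm, hqj.symm]

lemma orbit_ev_add_ev_right {p j k : Fin l} (hp : p.val < 2) (hj : 2 ≤ j.val) (hk : 2 ≤ k.val) :
    orbit (W0D l hl) (ev p + ev j) = orbit (W0D l hl) (ev p + ev k) := by
  rcases eq_or_ne j k with rfl | hjk
  · rfl
  have hpj : p ≠ j := Fin.ne_of_val_ne (by omega)
  have hpk : p ≠ k := Fin.ne_of_val_ne (by omega)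
  rw [← orbit_add_of_mem_Phi0D (ev_sub_ev_mem_Phi0D hjk.symm (by omega))]
  · congr 1; abel
  · simp [add_dotProduct, dotProduct_sub, ev_dotProduct_ev, hjk, hpj, hpk]

lemma orbit_ev_sub_ev {p j m : Fin l} (hp : p.val < 2) (hj : 2 ≤ j.val) (hm : 2 ≤ m.val)
    (hmj : m ≠ j) : orbit (W0D l hl) (ev p - ev j) = orbit (W0D l hl) (ev p + ev j) := by
  have hpj : p ≠ j := Fin.ne_of_val_ne (by omega)
  have hpm : p ≠ m := Fin.ne_of_val_ne (by omega)
  calc orbit (W0D l hl) (ev p - ev j)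
      = orbit (W0D l hl) (ev p - ev j + (ev j - ev m)) := by
        refine (orbit_add_of_mem_Phi0D (ev_sub_ev_mem_Phi0D hmj.symm (by omega)) ?_).symm
        simp [sub_dotProduct, dotProduct_sub, ev_dotProduct_ev, hpj, hpm, hmj.symm]
    _ = orbit (W0D l hl) (ev p - ev m + (ev j + ev m)) := by
        rw [sub_add_sub_cancel]
        refine (orbit_add_of_mem_Phi0D (ev_add_ev_mem_Phi0D hmj.symm hj hm) ?_).symm
        simp [sub_dotProduct, dotProduct_add, ev_dotProduct_ev, hpj, hpm, hmj]
    _ = orbit (W0D l hl) (ev p + ev j) := by congr 1; abel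

lemma exists_orbit_eq_ev_add_ev {β : Fin l → ℚ} (hβ : β ∈ Phi1D l hl) :
    ∃ p j : Fin l, p.val < 2 ∧ 2 ≤ j.val ∧
      orbit (W0D l hl) β = orbit (W0D l hl) (ev p + ev j) := by
  obtain ⟨p, j, hp, hj, rfl | rfl⟩ := exists_eq_ev_add_ev_or_ev_sub_ev hβ
  · exact ⟨p, j, hp, hj, rfl⟩
  · obtain ⟨m, hm, hmj⟩ := exists_two_le_ne hl j
    exact ⟨p, j, hp, hj, orbit_ev_sub_ev hp hj hm hmj⟩

/-- `W₀` acts transitively on `Φ₁`. -/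
theorem W0_transitive_on_Phi1 (l : ℕ) (hl : 4 ≤ l) :
    ∀ β ∈ Phi1D l hl, ∀ γ ∈ Phi1D l hl, ∃ w ∈ W0D l hl, w β = γ := by
  intro β hβ γ hγ
  obtain ⟨p, j, hp, hj, hβ⟩ := exists_orbit_eq_ev_add_ev hβ
  obtain ⟨q, k, hq, hk, hγ⟩ := exists_orbit_eq_ev_add_ev hγ
  have hγβ : γ ∈ orbit (W0D l hl) β := by
    rw [← orbit_eq_iff, hβ, hγ, orbit_ev_add_ev_left hq hp hk, orbit_ev_add_ev_right hp hk hj]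
  obtain ⟨w, hw⟩ := hγβ
  exact ⟨w, w.2, hw⟩
end

section
/- Let l ≥ 4 and realize the root system Φ of type D_l concretely as Φ = {±eᵢ ± eⱼ : 1 ≤ i < j ≤ l} ⊂ ℚˡ with the standard inner product ⟨·,·⟩, with maximal root δ = e₁ + e₂ and Φ₁ = {α ∈ Φ : ⟨α, δ⟩ = 1}. If λ, μ, ν, ξ ∈ Φ₁ are four pairwise orthogonal roots, then λ + μ + ν + ξ = 2δ. -/
lemma ip_ev_right {l : ℕ} (x : Fin l → ℚ) (i : Fin l) : ip x (ev i) = x i := by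
  unfold ip ev
  simp [Pi.single_apply]

lemma ip_add_right {l : ℕ} (x u v : Fin l → ℚ) : ip x (u + v) = ip x u + ip x v := by
  unfold ip
  simp [Pi.add_apply, mul_add, Finset.sum_add_distrib]

lemma ev_apply {l : ℕ} (i j : Fin l) : ev i j = if j = i then 1 else 0 := by
  simp [ev, Pi.single_apply]

lemma ip_nf {l : ℕ} (a k b m : Fin l) (s t : ℚ)
    (hak : a ≠ k) (ham : a ≠ m) (hbk : b ≠ k) :
    ip (ev a + s • ev k) (ev b + t • ev m) =
      (if a = b then 1 else 0) + s * t * (if k = m then 1 else 0) := by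
  unfold ip
  have : ∀ i : Fin l, (ev a + s • ev k) i * (ev b + t • ev m) i =
      (ev a i * ev b i + t * (ev a i * ev m i)) + (s * (ev k i * ev b i) + s * t * (ev k i * ev m i)) := by
    intro i; simp [Pi.add_apply, Pi.smul_apply, smul_eq_mul]; ring
  rw [Finset.sum_congr rfl fun i _ => this i]
  simp only [Finset.sum_add_distrib, ← Finset.mul_sum]
  have e1 : ∀ (p q : Fin l), ∑ i, ev p i * ev q i = if p = q then (1:ℚ) else 0 := by
    intro p q
    simp [ev, Pi.single_apply]
    by_cases h : p = q <;> simp [h, eq_comm]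
  rw [e1, e1, e1, e1]
  simp [if_neg ham, if_neg hbk.symm]

lemma pair_orth {l : ℕ} (a k m : Fin l) (s t : ℚ)
    (hak : a ≠ k) (ham : a ≠ m)
    (hs : s = 1 ∨ s = -1) (ht : t = 1 ∨ t = -1)
    (h : ip (ev a + s • ev k) (ev a + t • ev m) = 0) :
    m = k ∧ t = -s := by
  rw [ip_nf a k a m s t hak ham hak] at h
  simp at h
  by_cases hkm : k = m
  · rw [if_pos hkm] at h
    rcases hs with hs | hs <;> rcases ht with ht | ht <;>
      simp [hs, ht] at h ⊢ <;> first | exact hkm.symm | linarith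
  · rw [if_neg hkm] at h; norm_num at h

lemma triple_orth {l : ℕ} (a k₁ k₂ k₃ : Fin l) (s₁ s₂ s₃ : ℚ)
    (h1 : a ≠ k₁) (h2 : a ≠ k₂) (h3 : a ≠ k₃)
    (hs₁ : s₁ = 1 ∨ s₁ = -1) (hs₂ : s₂ = 1 ∨ s₂ = -1) (hs₃ : s₃ = 1 ∨ s₃ = -1)
    (h12 : ip (ev a + s₁ • ev k₁) (ev a + s₂ • ev k₂) = 0)
    (h13 : ip (ev a + s₁ • ev k₁) (ev a + s₃ • ev k₃) = 0)
    (h23 : ip (ev a + s₂ • ev k₂) (ev a + s₃ • ev k₃) = 0) : False := by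
  obtain ⟨e12, f12⟩ := pair_orth a k₁ k₂ s₁ s₂ h1 h2 hs₁ hs₂ h12
  obtain ⟨e13, f13⟩ := pair_orth a k₁ k₃ s₁ s₃ h1 h3 hs₁ hs₃ h13
  obtain ⟨e23, f23⟩ := pair_orth a k₂ k₃ s₂ s₃ h2 h3 hs₂ hs₃ h23
  rcases hs₁ with h | h <;> rw [h] at f12 f13 <;> rw [f12] at f23 <;> norm_num at f23 <;>
    rw [f23] at f13 <;> norm_num at f13

lemma mem_phi1_nf {l : ℕ} (hl : 4 ≤ l) (α : Fin l → ℚ) (h : α ∈ Phi1D l hl) :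
    ∃ (a k : Fin l) (s : ℚ),
      (a = (⟨0, by omega⟩ : Fin l) ∨ a = (⟨1, by omega⟩ : Fin l)) ∧
      (⟨0, by omega⟩ : Fin l) ≠ k ∧ (⟨1, by omega⟩ : Fin l) ≠ k ∧
      (s = 1 ∨ s = -1) ∧ α = ev a + s • ev k := by
  obtain ⟨⟨i, j, hij, hc⟩, hip⟩ := h
  set z0 : Fin l := ⟨0, by omega⟩ with hz0def
  set z1 : Fin l := ⟨1, by omega⟩ with hz1def
  have hip' : α z0 + α z1 = 1 := by
    rw [deltaD, ip_add_right, ip_ev_right, ip_ev_right] at hip; exact hip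
  have hv0 : (z0 : ℕ) = 0 := rfl
  have hv1 : (z1 : ℕ) = 1 := rfl
  clear_value z0 z1
  have hz01 : z0 ≠ z1 := by
    intro e; rw [Fin.ext_iff, hv0, hv1] at e; omega
  have hz0j : z0 ≠ j := by
    intro e; rw [← e] at hij
    have h1 : (i : ℕ) < (z0 : ℕ) := hij
    omega
  by_cases hj : z1 = j
  · have hi : i = z0 := by
      rw [← hj] at hij
      have h1 : (i : ℕ) < (z1 : ℕ) := hij
      exact Fin.ext (by rw [hv0]; omega)
    subst hi
    rcases hc with rfl | rfl | rfl | rfl <;>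
      simp [ev_apply, hz01, hz01.symm, hz0j, hj, hij.ne, hij.ne'] at hip' <;> norm_num at hip'
  · by_cases hi0 : z0 = i
    · have hz1i : z1 ≠ i := by rw [← hi0]; exact hz01.symm
      rcases hc with rfl | rfl | rfl | rfl
      · exact ⟨i, j, 1, Or.inl hi0.symm, hz0j, hj, Or.inl rfl, by rw [one_smul]⟩
      · exact ⟨i, j, -1, Or.inl hi0.symm, hz0j, hj, Or.inr rfl,
          by rw [neg_one_smul, sub_eq_add_neg]⟩
      · simp [ev_apply, ← hi0, hz0j, hj, hz1i, hz01, hz01.symm] at hip'; norm_num at hip'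
      · simp [ev_apply, ← hi0, hz0j, hj, hz1i, hz01, hz01.symm] at hip'; norm_num at hip'
    · by_cases hi1 : z1 = i
      · rcases hc with rfl | rfl | rfl | rfl
        · exact ⟨i, j, 1, Or.inr hi1.symm, hz0j, hj, Or.inl rfl, by rw [one_smul]⟩
        · exact ⟨i, j, -1, Or.inr hi1.symm, hz0j, hj, Or.inr rfl,
            by rw [neg_one_smul, sub_eq_add_neg]⟩
        · simp [ev_apply, ← hi1, hz0j, hj, hi0, hz01, hz01.symm] at hip'; norm_num at hip'
        · simp [ev_apply, ← hi1, hz0j, hj, hi0, hz01, hz01.symm] at hip'; norm_num at hip'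
      · rcases hc with rfl | rfl | rfl | rfl <;>
          simp [ev_apply, hi0, hi1, hz0j, hj] at hip'

set_option maxHeartbeats 2000000 in
lemma core {l : ℕ} (z0 z1 : Fin l)
    (a₁ a₂ a₃ a₄ k₁ k₂ k₃ k₄ : Fin l) (s₁ s₂ s₃ s₄ : ℚ)
    (ha₁ : a₁ = z0 ∨ a₁ = z1) (ha₂ : a₂ = z0 ∨ a₂ = z1)
    (ha₃ : a₃ = z0 ∨ a₃ = z1) (ha₄ : a₄ = z0 ∨ a₄ = z1)
    (h0k₁ : z0 ≠ k₁) (h1k₁ : z1 ≠ k₁) (h0k₂ : z0 ≠ k₂) (h1k₂ : z1 ≠ k₂)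
    (h0k₃ : z0 ≠ k₃) (h1k₃ : z1 ≠ k₃) (h0k₄ : z0 ≠ k₄) (h1k₄ : z1 ≠ k₄)
    (hs₁ : s₁ = 1 ∨ s₁ = -1) (hs₂ : s₂ = 1 ∨ s₂ = -1)
    (hs₃ : s₃ = 1 ∨ s₃ = -1) (hs₄ : s₄ = 1 ∨ s₄ = -1)
    (h12 : ip (ev a₁ + s₁ • ev k₁) (ev a₂ + s₂ • ev k₂) = 0)
    (h13 : ip (ev a₁ + s₁ • ev k₁) (ev a₃ + s₃ • ev k₃) = 0)
    (h14 : ip (ev a₁ + s₁ • ev k₁) (ev a₄ + s₄ • ev k₄) = 0)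
    (h23 : ip (ev a₂ + s₂ • ev k₂) (ev a₃ + s₃ • ev k₃) = 0)
    (h24 : ip (ev a₂ + s₂ • ev k₂) (ev a₄ + s₄ • ev k₄) = 0)
    (h34 : ip (ev a₃ + s₃ • ev k₃) (ev a₄ + s₄ • ev k₄) = 0) :
    (ev a₁ + s₁ • ev k₁) + (ev a₂ + s₂ • ev k₂) + (ev a₃ + s₃ • ev k₃) + (ev a₄ + s₄ • ev k₄)
      = (2 : ℚ) • (ev z0 + ev z1) := by
  rcases ha₁ with rfl | rfl <;> rcases ha₂ with rfl | rfl <;>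
    rcases ha₃ with rfl | rfl <;> rcases ha₄ with rfl | rfl <;>
  first
  | exact (triple_orth _ k₁ k₂ k₃ s₁ s₂ s₃ (by assumption) (by assumption) (by assumption)
      hs₁ hs₂ hs₃ h12 h13 h23).elim
  | exact (triple_orth _ k₁ k₂ k₄ s₁ s₂ s₄ (by assumption) (by assumption) (by assumption)
      hs₁ hs₂ hs₄ h12 h14 h24).elim
  | exact (triple_orth _ k₁ k₃ k₄ s₁ s₃ s₄ (by assumption) (by assumption) (by assumption)
      hs₁ hs₃ hs₄ h13 h14 h34).elim
  | exact (triple_orth _ k₂ k₃ k₄ s₂ s₃ s₄ (by assumption) (by assumption) (by assumption)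
      hs₂ hs₃ hs₄ h23 h24 h34).elim
  | (obtain ⟨rfl, rfl⟩ := pair_orth _ k₁ k₂ s₁ s₂ (by assumption) (by assumption) hs₁ hs₂ h12
     obtain ⟨rfl, rfl⟩ := pair_orth _ k₃ k₄ s₃ s₄ (by assumption) (by assumption) hs₃ hs₄ h34
     module)
  | (obtain ⟨rfl, rfl⟩ := pair_orth _ k₁ k₃ s₁ s₃ (by assumption) (by assumption) hs₁ hs₃ h13
     obtain ⟨rfl, rfl⟩ := pair_orth _ k₂ k₄ s₂ s₄ (by assumption) (by assumption) hs₂ hs₄ h24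
     module)
  | (obtain ⟨rfl, rfl⟩ := pair_orth _ k₁ k₄ s₁ s₄ (by assumption) (by assumption) hs₁ hs₄ h14
     obtain ⟨rfl, rfl⟩ := pair_orth _ k₂ k₃ s₂ s₃ (by assumption) (by assumption) hs₂ hs₃ h23
     module)

/-- If `λ, μ, ν, ξ ∈ Φ₁` are pairwise orthogonal, then
`λ + μ + ν + ξ = 2δ`. -/
theorem sum_four_orthogonal_roots (l : ℕ) (hl : 4 ≤ l)
    (lam mu nu xi : Fin l → ℚ)
    (hlam : lam ∈ Phi1D l hl) (hmu : mu ∈ Phi1D l hl)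
    (hnu : nu ∈ Phi1D l hl) (hxi : xi ∈ Phi1D l hl)
    (h12 : ip lam mu = 0) (h13 : ip lam nu = 0) (h14 : ip lam xi = 0)
    (h23 : ip mu nu = 0) (h24 : ip mu xi = 0) (h34 : ip nu xi = 0) :
    lam + mu + nu + xi = (2 : ℚ) • deltaD l hl := by
  obtain ⟨a₁, k₁, s₁, ha₁, h0k₁, h1k₁, hs₁, rfl⟩ := mem_phi1_nf hl lam hlam
  obtain ⟨a₂, k₂, s₂, ha₂, h0k₂, h1k₂, hs₂, rfl⟩ := mem_phi1_nf hl mu hmu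
  obtain ⟨a₃, k₃, s₃, ha₃, h0k₃, h1k₃, hs₃, rfl⟩ := mem_phi1_nf hl nu hnu
  obtain ⟨a₄, k₄, s₄, ha₄, h0k₄, h1k₄, hs₄, rfl⟩ := mem_phi1_nf hl xi hxi
  rw [deltaD]
  exact core _ _ _ _ _ _ _ _ _ _ _ _ _ _ ha₁ ha₂ ha₃ ha₄
    h0k₁ h1k₁ h0k₂ h1k₂ h0k₃ h1k₃ h0k₄ h1k₄ hs₁ hs₂ hs₃ hs₄ h12 h13 h14 h23 h24 h34
end

section
/- Let Φ be a finite reduced crystallographic root system in which all roots have the same length (simply laced: for any roots μ, ν with μ ≠ ±ν the Cartan integer 2⟨μ,ν⟩/⟨ν,ν⟩ lies in {−1, 0, 1}), and let Π be a base of simple roots of Φ. Let γ ∈ Φ and let α, β ∈ Π be two distinct simple roots such that γ − α ∈ Φ, γ − β ∈ Φ, and γ ≠ α + β. Then ⟨α, β⟩ = 0 and γ − α − β ∈ Φ. -/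
section Aux

variable {V : Type*} [AddCommGroup V] [Module ℚ V] [DecidableEq V]

/-- Sum of "indicator" coefficients picks out the element. -/
lemma aux_indicator_sum (Δ : Finset V) {x : V} (hx : x ∈ Δ) :
    ∑ i : Δ, (if i = (⟨x, hx⟩ : Δ) then (1 : ℚ) else 0) • (i : V) = x := by
  simp [ite_smul, Finset.sum_ite_eq']

/-- Two distinct simple roots are not negatives of each other. -/
lemma aux_ne_neg (Δ : Finset V)
    (hΔind : LinearIndependent ℚ (fun a : Δ => (a : V)))
    {α β : V} (hα : α ∈ Δ) (hβ : β ∈ Δ) (hαβ : α ≠ β) : α ≠ -β := by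
  intro h
  have hfi := Fintype.linearIndependent_iff.mp hΔind
  set aα : Δ := ⟨α, hα⟩ with haα
  set aβ : Δ := ⟨β, hβ⟩ with haβ
  have hab : aα ≠ aβ := fun h' => hαβ (congrArg Subtype.val h')
  have h0 : ∑ i : Δ, ((if i = aα then (1 : ℚ) else 0) + (if i = aβ then (1 : ℚ) else 0)) • (i : V) = 0 := by
    simp only [add_smul, Finset.sum_add_distrib]
    rw [aux_indicator_sum Δ hα, aux_indicator_sum Δ hβ, h]
    abel
  have := hfi _ h0 aα
  rw [if_pos rfl, if_neg hab] at this
  norm_num at this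

/-- The difference of two distinct simple roots is not a root. -/
lemma aux_sub_not_root (Φ : Set V) (Δ : Finset V)
    (hΔind : LinearIndependent ℚ (fun a : Δ => (a : V)))
    (hΔbase : ∀ γ ∈ Φ, (∃ c : V → ℕ, γ = ∑ a ∈ Δ, (c a : ℚ) • a) ∨
      (∃ c : V → ℕ, γ = -∑ a ∈ Δ, (c a : ℚ) • a))
    {α β : V} (hα : α ∈ Δ) (hβ : β ∈ Δ) (hαβ : α ≠ β) :
    α - β ∉ Φ := by
  intro hmem
  have hfi := Fintype.linearIndependent_iff.mp hΔind
  set aα : Δ := ⟨α, hα⟩ with haα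
  set aβ : Δ := ⟨β, hβ⟩ with haβ
  have hab : aα ≠ aβ := fun h' => hαβ (congrArg Subtype.val h')
  have hsum : ∀ c : V → ℕ, ∑ i : Δ, (c (i : V) : ℚ) • (i : V) = ∑ a ∈ Δ, (c a : ℚ) • a := by
    intro c
    exact Finset.sum_coe_sort Δ (fun a => (c a : ℚ) • a)
  rcases hΔbase _ hmem with ⟨c, hc⟩ | ⟨c, hc⟩
  · have h0 : ∑ i : Δ, ((if i = aα then (1 : ℚ) else 0) - (if i = aβ then (1 : ℚ) else 0)
        - (c (i : V) : ℚ)) • (i : V) = 0 := by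
      simp only [sub_smul, Finset.sum_sub_distrib]
      rw [aux_indicator_sum Δ hα, aux_indicator_sum Δ hβ, hsum c, ← hc]
      abel
    have := hfi _ h0 aβ
    rw [if_neg hab.symm, if_pos rfl] at this
    have hnn : (0 : ℚ) ≤ (c β : ℚ) := Nat.cast_nonneg _
    have : (c β : ℚ) = -1 := by linarith
    linarith
  · have h0 : ∑ i : Δ, ((c (i : V) : ℚ) + (if i = aα then (1 : ℚ) else 0)
        - (if i = aβ then (1 : ℚ) else 0)) • (i : V) = 0 := by
      simp only [add_smul, sub_smul, Finset.sum_sub_distrib, Finset.sum_add_distrib]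
      rw [aux_indicator_sum Δ hα, aux_indicator_sum Δ hβ, hsum c]
      have : ∑ a ∈ Δ, (c a : ℚ) • a = -(α - β) := by rw [← neg_eq_iff_eq_neg, ← hc]
      rw [this]
      abel
    have := hfi _ h0 aα
    rw [if_pos rfl, if_neg hab] at this
    have hnn : (0 : ℚ) ≤ (c α : ℚ) := Nat.cast_nonneg _
    linarith

/-- In a simply-laced system, if `μ - ν` is a root then the Cartan integer `⟨μ,ν⟩ = 1`. -/
lemma aux_cartan_one (B : V →ₗ[ℚ] V →ₗ[ℚ] ℚ)
    (hBpos : ∀ v : V, v ≠ 0 → 0 < B v v)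
    (Φ : Set V) (hne : (0 : V) ∉ Φ)
    (hreduced : ∀ μ ∈ Φ, ∀ c : ℚ, c • μ ∈ Φ → c = 1 ∨ c = -1)
    (hlaced : ∀ μ ∈ Φ, ∀ ν ∈ Φ, μ ≠ ν → μ ≠ -ν →
      2 * B μ ν / B ν ν ∈ ({-1, 0, 1} : Set ℚ))
    {μ ν : V} (hμ : μ ∈ Φ) (hν : ν ∈ Φ) (hd : μ - ν ∈ Φ) :
    2 * B μ ν / B ν ν = 1 := by
  have hν0 : ν ≠ 0 := fun h => hne (h ▸ hν)
  have hB : B ν ν ≠ 0 := ne_of_gt (hBpos ν hν0)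
  have hμν : μ ≠ ν := by
    rintro rfl
    rw [sub_self] at hd
    exact hne hd
  have hμν' : μ ≠ -ν := by
    rintro rfl
    have h2 : (-2 : ℚ) • ν ∈ Φ := by
      have : (-2 : ℚ) • ν = -ν - ν := by
        rw [neg_smul, two_smul, neg_add, sub_eq_add_neg]
      rwa [this]
    rcases hreduced ν hν _ h2 with h | h <;> norm_num at h
  have hδν : μ - ν ≠ ν := by
    intro h
    have h2 : (2 : ℚ) • ν ∈ Φ := by
      have : (2 : ℚ) • ν = μ := by
        rw [two_smul, ← sub_eq_iff_eq_add.mp h]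
      rwa [this]
    rcases hreduced ν hν _ h2 with h' | h' <;> norm_num at h'
  have hδν' : μ - ν ≠ -ν := by
    intro h
    have : μ = 0 := by
      have := sub_eq_iff_eq_add.mp h
      rw [this]; abel
    exact hne (this ▸ hμ)
  have h1 := hlaced μ hμ ν hν hμν hμν'
  have h2 := hlaced (μ - ν) hd ν hν hδν hδν'
  have key : 2 * B (μ - ν) ν / B ν ν = 2 * B μ ν / B ν ν - 2 := by
    rw [map_sub, LinearMap.sub_apply]
    field_simp
  rw [key] at h2
  simp only [Set.mem_insert_iff, Set.mem_singleton_iff] at h1 h2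
  rcases h1 with h | h | h <;> rcases h2 with h' | h' | h' <;> linarith

end Aux

open Finset in
/-- Let `Φ` be a finite reduced crystallographic root system, all of
whose roots have the same length (simply laced), in a rational vector space `V`
equipped with a symmetric positive-definite bilinear form `B`, and let `Π` be a base
of simple roots of `Φ`.  If `γ ∈ Φ` and `α ≠ β` are simple roots with
`γ - α ∈ Φ`, `γ - β ∈ Φ` and `γ ≠ α + β`, then `⟨α, β⟩ = 0` and `γ - α - β ∈ Φ`. -/
theorem subtract_two_simple_roots {V : Type*} [AddCommGroup V] [Module ℚ V]
    (B : V →ₗ[ℚ] V →ₗ[ℚ] ℚ)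
    (hBsymm : ∀ u v : V, B u v = B v u)
    (hBpos : ∀ v : V, v ≠ 0 → 0 < B v v)
    (Φ : Set V)
    (hfin : Φ.Finite)
    (hne : (0 : V) ∉ Φ)
    (hneg : ∀ μ ∈ Φ, -μ ∈ Φ)
    (hreduced : ∀ μ ∈ Φ, ∀ c : ℚ, c • μ ∈ Φ → c = 1 ∨ c = -1)
    (hreflect : ∀ μ ∈ Φ, ∀ ν ∈ Φ, μ - (2 * B μ ν / B ν ν) • ν ∈ Φ)
    (hcrys : ∀ μ ∈ Φ, ∀ ν ∈ Φ, ∃ n : ℤ, 2 * B μ ν / B ν ν = (n : ℚ))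
    (hlaced : ∀ μ ∈ Φ, ∀ ν ∈ Φ, μ ≠ ν → μ ≠ -ν →
      2 * B μ ν / B ν ν ∈ ({-1, 0, 1} : Set ℚ))
    (Δ : Finset V)
    (hΔΦ : (Δ : Set V) ⊆ Φ)
    (hΔind : LinearIndependent ℚ (fun a : Δ => (a : V)))
    (hΔbase : ∀ γ ∈ Φ, (∃ c : V → ℕ, γ = ∑ a ∈ Δ, (c a : ℚ) • a) ∨
      (∃ c : V → ℕ, γ = -∑ a ∈ Δ, (c a : ℚ) • a))
    (γ : V) (hγ : γ ∈ Φ) (α β : V) (hα : α ∈ Δ) (hβ : β ∈ Δ) (hαβ : α ≠ β)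
    (hγα : γ - α ∈ Φ) (hγβ : γ - β ∈ Φ) (hγne : γ ≠ α + β) :
    B α β = 0 ∧ γ - α - β ∈ Φ := by
  classical
  have hαΦ : α ∈ Φ := hΔΦ hα
  have hβΦ : β ∈ Φ := hΔΦ hβ
  have hβ0 : β ≠ 0 := fun h => hne (h ▸ hβΦ)
  have hBβ : B β β ≠ 0 := ne_of_gt (hBpos β hβ0)
  have hαβ' : α ≠ -β := aux_ne_neg Δ hΔind hα hβ hαβ
  have hsubA : α - β ∉ Φ := aux_sub_not_root Φ Δ hΔind hΔbase hα hβ hαβ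
  have hcγβ : 2 * B γ β / B β β = 1 :=
    aux_cartan_one B hBpos Φ hne hreduced hlaced hγ hβΦ hγβ
  have hδβ : γ - α ≠ β := by
    intro h
    exact hγne (by rw [sub_eq_iff_eq_add.mp h, add_comm])
  have hδβ' : γ - α ≠ -β := by
    intro h
    have hγeq : γ = α - β := by
      rw [sub_eq_iff_eq_add.mp h]; abel
    exact hsubA (hγeq ▸ hγ)
  have hlδ := hlaced (γ - α) hγα β hβΦ hδβ hδβ'
  have hlαβ := hlaced α hαΦ β hβΦ hαβ hαβ'
  have key : 2 * B (γ - α) β / B β β = 2 * B γ β / B β β - 2 * B α β / B β β := by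
    rw [map_sub, LinearMap.sub_apply]
    field_simp
  rw [key, hcγβ] at hlδ
  simp only [Set.mem_insert_iff, Set.mem_singleton_iff] at hlδ hlαβ
  have hBαβ : B α β = 0 := by
    rcases hlαβ with h | h | h
    · rcases hlδ with h' | h' | h' <;> linarith
    · rw [div_eq_zero_iff] at h
      rcases h with h | h
      · linarith
      · exact absurd h hBβ
    · exfalso
      have hr := hreflect α hαΦ β hβΦ
      rw [h, one_smul] at hr
      exact hsubA hr
  refine ⟨hBαβ, ?_⟩
  have hc1 : 2 * B (γ - α) β / B β β = 1 := by
    rw [key, hcγβ, hBαβ]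
    ring
  have hr := hreflect (γ - α) hγα β hβΦ
  rw [hc1, one_smul] at hr
  exact hr
end
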